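/- Let A be a positively graded affine domain over k with e(A)=1 and let ∂ be a nonzero homogeneous locally nilpotent derivation on A of degree −d. Let h ∈ ker ∂ be homogeneous of degree m > 0 and F = A/(h−1), assumed to be a domain, with induced derivation ∂̄ and induced ℤ/mℤ-grading. Then the image of the graded kernel A^∂ under the projection A → F equals the kernel F^{∂̄}; consequently the support of the ℤ/mℤ-grading of F^{∂̄} is the subgroup generated by [e(A^∂)] in ℤ/mℤ. -/

import Mathlib

def IsLND {R A : Type*} [CommRing R] [CommRing A] [Algebra R A]
    (D : Derivation R A A) : Prop :=
  ∀ a : A, ∃ n : ℕ, (D.toLinearMap ^ n) a = 0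

/-!
Since `h ≡ 1` in `F = A/(h-1)`, the `ℤ/mℤ`-grading of `F` is the image of the coarsening of
the `ℤ`-grading of `A` by residues mod `m`; the ideal `(h - 1)` is homogeneous for that coarser
grading, and multiplying by powers of `h` shows that every element of the piece `F_i` is the image
of a single homogeneous element. Comparing the top and bottom components of `(h - 1) b` shows
that no nonzero homogeneous element of `A` lies in `(h - 1)`. As `∂̄` maps `F_i` to `F_{i-d}`,
an element of `ker ∂̄` has all its graded pieces in `ker ∂̄`; each lifts to a homogeneous `c`
with `∂ c` homogeneous and in `(h - 1)`, hence `∂ c = 0`.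

For the support: the degrees of nonzero homogeneous elements of `A^∂` form a submonoid of `ℤ`
generating `e(A^∂) ℤ`, and the image of a submonoid in the finite group `ℤ/mℤ` is a subgroup.
-/

open DirectSum

section Grading

variable {R A : Type*} [CommRing R] [CommRing A] [Algebra R A]
  (𝒜 : ℤ → Submodule R A) [GradedAlgebra 𝒜]

theorem coe_decompose_sub_one_mul {h : A} {m : ℤ} (hh : h ∈ 𝒜 m) (b : A) (μ : ℤ) :
    (decompose 𝒜 ((h - 1) * b) μ : A) = h * decompose 𝒜 b (μ - m) - decompose 𝒜 b μ := by
  rw [sub_mul, one_mul, decompose_sub, DirectSum.sub_apply, Submodule.coe_sub,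
    ← coe_decompose_mul_add_of_left_mem 𝒜 hh, add_sub_cancel]

theorem eq_zero_of_homogeneous_mem_span_sub_one [IsDomain A] {h : A} {m : ℤ} (hm : 0 < m)
    (hh : h ∈ 𝒜 m) (h0 : h ≠ 0) {ν : ℤ} {a : A} (ha : a ∈ 𝒜 ν)
    (hmem : a ∈ Ideal.span {h - 1}) : a = 0 := by
  classical
  obtain ⟨b, rfl⟩ := Ideal.mem_span_singleton.mp hmem
  by_contra hab
  have hs : (decompose 𝒜 b).support.Nonempty := by
    rw [Finset.nonempty_iff_ne_empty, Ne, DFinsupp.support_eq_empty]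
    rintro hb
    exact right_ne_zero_of_mul hab ((decompose 𝒜).injective (hb.trans (decompose_zero 𝒜).symm))
  set s := (decompose 𝒜 b).support
  have coe_ne_zero {μ : ℤ} : μ ∈ s → (decompose 𝒜 b μ : A) ≠ 0 := by
    simp [s]
  have coe_eq_zero {μ : ℤ} : μ ∉ s → (decompose 𝒜 b μ : A) = 0 := by
    simp [s]
  have eq_of_ne_zero {μ : ℤ} (hμ : (decompose 𝒜 ((h - 1) * b) μ : A) ≠ 0) : μ = ν := by
    by_contra hne
    exact hμ (decompose_of_mem_ne 𝒜 ha (Ne.symm hne))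
  -- the top component of `(h - 1) * b` is `h * b_max`, the bottom one `-b_min`
  have top : s.max' hs + m = ν := eq_of_ne_zero <| by
    rw [coe_decompose_sub_one_mul 𝒜 hh, add_sub_cancel_right,
      coe_eq_zero (μ := s.max' hs + m) fun hmem => by linarith [s.le_max' _ hmem], sub_zero]
    exact mul_ne_zero h0 (coe_ne_zero (s.max'_mem hs))
  have bot : s.min' hs = ν := eq_of_ne_zero <| by
    rw [coe_decompose_sub_one_mul 𝒜 hh,
      coe_eq_zero (μ := s.min' hs - m) fun hmem => by linarith [s.min'_le _ hmem], mul_zero,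
      zero_sub, neg_ne_zero]
    exact coe_ne_zero (s.min'_mem hs)
  linarith [s.min'_le_max' hs]

open Classical in
noncomputable def classProj (m : ℕ) (r : ZMod m) : A →+ A :=
  (DirectSum.coeAddMonoidHom 𝒜).comp <|
    (DFinsupp.filterAddMonoidHom (fun ν : ℤ => 𝒜 ν) (fun ν : ℤ => (ν : ZMod m) = r)).comp
      (decomposeAddEquiv 𝒜).toAddMonoidHom

theorem classProj_of_mem {m : ℕ} (r : ZMod m) {ν : ℤ} {x : A} (hx : x ∈ 𝒜 ν) :
    classProj 𝒜 m r x = if (ν : ZMod m) = r then x else 0 := by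
  classical
  change DirectSum.coeAddMonoidHom 𝒜 (DFinsupp.filter _ (decompose 𝒜 x)) = _
  rw [decompose_of_mem 𝒜 hx, DirectSum.of, DFinsupp.singleAddHom_apply, DFinsupp.filter_single]
  split_ifs
  · exact coeAddMonoidHom_of 𝒜 ν ⟨x, hx⟩
  · exact map_zero _

theorem classProj_mul_of_mem {m : ℕ} (r : ZMod m) {n : ℤ} {h : A} (hh : h ∈ 𝒜 n) (b : A) :
    classProj 𝒜 m r (h * b) = h * classProj 𝒜 m (r - n) b := by
  induction b using DirectSum.Decomposition.inductionOn 𝒜 with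
  | zero => simp
  | @homogeneous i x =>
    have hdeg : ((n + i : ℤ) : ZMod m) = r ↔ (i : ZMod m) = r - n := by
      rw [Int.cast_add, eq_sub_iff_add_eq']
    rw [classProj_of_mem 𝒜 r (SetLike.mul_mem_graded hh x.2), classProj_of_mem 𝒜 _ x.2]
    simp only [hdeg]
    split_ifs <;> simp
  | add b b' hb hb' => rw [mul_add, map_add, hb, hb', map_add, mul_add]

theorem classProj_mem_span_sub_one {m : ℕ} (r : ZMod m) {h : A} (hh : h ∈ 𝒜 m) {a : A}
    (ha : a ∈ Ideal.span {h - 1}) : classProj 𝒜 m r a ∈ Ideal.span {h - 1} := by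
  obtain ⟨b, rfl⟩ := Ideal.mem_span_singleton'.mp ha
  refine Ideal.mem_span_singleton'.mpr ⟨classProj 𝒜 m r b, ?_⟩
  have := classProj_mul_of_mem 𝒜 r hh b
  simp only [Int.cast_natCast, ZMod.natCast_self, sub_zero] at this
  rw [mul_sub_one, mul_sub_one, map_sub, mul_comm b, this]
  ring

end Grading

section QuotientPieces

variable {R A : Type*} [CommRing R] [CommRing A] [Algebra R A]
  (𝒜 : ℤ → Submodule R A) {h : A} {m : ℕ}

theorem Ideal.Quotient.mk_span_sub_one_self (h : A) :
    Ideal.Quotient.mk (Ideal.span {h - 1}) h = 1 := by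
  rw [← map_one (Ideal.Quotient.mk _), Ideal.Quotient.eq]
  exact Ideal.mem_span_singleton_self _

variable (h m) in
def quotientPiece (i : ZMod m) : Submodule R (A ⧸ Ideal.span {h - 1}) :=
  Submodule.span R
    (Ideal.Quotient.mk (Ideal.span {h - 1}) '' {a | ∃ ν : ℤ, (ν : ZMod m) = i ∧ a ∈ 𝒜 ν})

theorem mk_mem_quotientPiece {ν : ℤ} {a : A} (ha : a ∈ 𝒜 ν) :
    Ideal.Quotient.mk (Ideal.span {h - 1}) a ∈ quotientPiece 𝒜 h m ν :=
  Submodule.subset_span ⟨a, ⟨ν, rfl, ha⟩, rfl⟩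

variable [GradedAlgebra 𝒜]

-- multiplying by powers of `h ≡ 1` raises degrees by multiples of `m`
theorem exists_mk_eq_add_mk (hh : h ∈ 𝒜 m) {ν₁ ν₂ : ℤ} (hν : (ν₁ : ZMod m) = ν₂) {c₁ c₂ : A}
    (hc₁ : c₁ ∈ 𝒜 ν₁) (hc₂ : c₂ ∈ 𝒜 ν₂) :
    ∃ ν : ℤ, (ν : ZMod m) = ν₁ ∧ ∃ c ∈ 𝒜 ν, Ideal.Quotient.mk (Ideal.span {h - 1}) c =
      Ideal.Quotient.mk (Ideal.span {h - 1}) c₁ + Ideal.Quotient.mk (Ideal.span {h - 1}) c₂ := by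
  obtain ⟨s, hs⟩ := (ZMod.intCast_eq_intCast_iff_dvd_sub _ _ _).mp hν
  have pow_mul_mem {t : ℕ} {ν : ℤ} {c : A} (hc : c ∈ 𝒜 ν) : h ^ t * c ∈ 𝒜 (t • (m : ℤ) + ν) :=
    SetLike.mul_mem_graded (SetLike.pow_mem_graded t hh) hc
  refine ⟨ν₁ + m * s.toNat, by simp, h ^ s.toNat * c₁ + h ^ (-s).toNat * c₂,
    Submodule.add_mem _ ?_ ?_, by simp [Ideal.Quotient.mk_span_sub_one_self]⟩
  · convert pow_mul_mem hc₁ using 2; simp; ring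
  · convert pow_mul_mem hc₂ using 2
    have := s.toNat_sub_toNat_neg
    simp only [nsmul_eq_mul]
    linear_combination (m : ℤ) * this - hs

theorem exists_mk_eq_of_mem_quotientPiece (hh : h ∈ 𝒜 m) {i : ZMod m}
    {x : A ⧸ Ideal.span {h - 1}} (hx : x ∈ quotientPiece 𝒜 h m i) :
    ∃ ν : ℤ, (ν : ZMod m) = i ∧ ∃ c ∈ 𝒜 ν, Ideal.Quotient.mk (Ideal.span {h - 1}) c = x := by
  induction hx using Submodule.span_induction with
  | mem x hx =>
    obtain ⟨a, ⟨ν, hν, ha⟩, rfl⟩ := hx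
    exact ⟨ν, hν, a, ha, rfl⟩
  | zero => exact ⟨i.cast, ZMod.intCast_zmod_cast i, 0, Submodule.zero_mem _, map_zero _⟩
  | add x y _ _ hx hy =>
    obtain ⟨ν₁, hν₁, c₁, hc₁, rfl⟩ := hx
    obtain ⟨ν₂, hν₂, c₂, hc₂, rfl⟩ := hy
    obtain ⟨ν, hν, c, hc, hmk⟩ := exists_mk_eq_add_mk 𝒜 hh (hν₁.trans hν₂.symm) hc₁ hc₂
    exact ⟨ν, hν.trans hν₁, c, hc, hmk⟩
  | smul r x _ hx =>
    obtain ⟨ν, hν, c, hc, rfl⟩ := hx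
    exact ⟨ν, hν, r • c, Submodule.smul_mem _ r hc, map_smul (Ideal.Quotient.mkₐ R _) r c⟩

end QuotientPieces

section QuotientGrading

variable {R A : Type*} [CommRing R] [CommRing A] [Algebra R A]
  (𝒜 : ℤ → Submodule R A) [GradedAlgebra 𝒜] {h : A} {m : ℕ} [NeZero m]

theorem exists_sum_eq_of_mem_quotientPiece (x : A ⧸ Ideal.span {h - 1}) :
    ∃ y : ZMod m → A ⧸ Ideal.span {h - 1},
      (∀ r, y r ∈ quotientPiece 𝒜 h m r) ∧ ∑ r, y r = x := by
  obtain ⟨a, rfl⟩ := Ideal.Quotient.mk_surjective x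
  induction a using DirectSum.Decomposition.inductionOn 𝒜 with
  | zero => exact ⟨0, fun r => Submodule.zero_mem _, by simp⟩
  | @homogeneous ν a =>
    refine ⟨Pi.single (ν : ZMod m) (Ideal.Quotient.mk _ a), fun r => ?_, by simp⟩
    rcases eq_or_ne r ν with rfl | hr
    · simpa using mk_mem_quotientPiece 𝒜 a.2
    · simp [hr]
  | add a b ha hb =>
    obtain ⟨y, hy, hya⟩ := ha
    obtain ⟨z, hz, hzb⟩ := hb
    exact ⟨y + z, fun r => Submodule.add_mem _ (hy r) (hz r), by
      simp [Finset.sum_add_distrib, hya, hzb]⟩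

theorem eq_zero_of_sum_eq_zero_of_mem_quotientPiece [IsDomain A] (hh : h ∈ 𝒜 m) (h0 : h ≠ 0)
    {y : ZMod m → A ⧸ Ideal.span {h - 1}} (hy : ∀ r, y r ∈ quotientPiece 𝒜 h m r)
    (hsum : ∑ r, y r = 0) (r : ZMod m) : y r = 0 := by
  choose ν hν c hc hcy using fun r => exists_mk_eq_of_mem_quotientPiece 𝒜 hh (hy r)
  have hsum_mem : ∑ r, c r ∈ Ideal.span {h - 1} := by
    rw [← Ideal.Quotient.eq_zero_iff_mem, map_sum]
    simpa [hcy] using hsum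
  have hproj : classProj 𝒜 m r (∑ r', c r') = c r := by
    simp [map_sum, classProj_of_mem 𝒜 r (hc _), hν]
  have hcr : c r ∈ Ideal.span {h - 1} := hproj ▸ classProj_mem_span_sub_one 𝒜 r hh hsum_mem
  rw [← hcy, eq_zero_of_homogeneous_mem_span_sub_one 𝒜 (by exact_mod_cast NeZero.pos m) hh h0
    (hc r) hcr, map_zero]

end QuotientGrading

section GradedLinearMap

variable {R A : Type*} [CommRing R] [CommRing A] [Algebra R A]
  (𝒜 : ℤ → Submodule R A) [GradedAlgebra 𝒜] {h : A} {m : ℕ}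
  {f : A →ₗ[R] A} {d : ℤ} (hf : ∀ ν : ℤ, ∀ a ∈ 𝒜 ν, f a ∈ 𝒜 (ν - d))
  {g : (A ⧸ Ideal.span {h - 1}) →ₗ[R] (A ⧸ Ideal.span {h - 1})}
  (hg : ∀ a, g (Ideal.Quotient.mk (Ideal.span {h - 1}) a) = Ideal.Quotient.mk _ (f a))
include hf hg

theorem map_mem_quotientPiece (hh : h ∈ 𝒜 m) {i : ZMod m} {x : A ⧸ Ideal.span {h - 1}}
    (hx : x ∈ quotientPiece 𝒜 h m i) : g x ∈ quotientPiece 𝒜 h m (i - d) := by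
  obtain ⟨ν, rfl, c, hc, rfl⟩ := exists_mk_eq_of_mem_quotientPiece 𝒜 hh hx
  rw [hg]
  simpa using mk_mem_quotientPiece 𝒜 (hf ν c hc)

theorem exists_ker_mk_eq_of_mem_quotientPiece [IsDomain A] [NeZero m] (hh : h ∈ 𝒜 m)
    (h0 : h ≠ 0) {i : ZMod m} {x : A ⧸ Ideal.span {h - 1}} (hx : x ∈ quotientPiece 𝒜 h m i)
    (hgx : g x = 0) :
    ∃ ν : ℤ, (ν : ZMod m) = i ∧ ∃ c ∈ 𝒜 ν, f c = 0 ∧ Ideal.Quotient.mk _ c = x := by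
  obtain ⟨ν, hν, c, hc, rfl⟩ := exists_mk_eq_of_mem_quotientPiece 𝒜 hh hx
  refine ⟨ν, hν, c, hc, eq_zero_of_homogeneous_mem_span_sub_one 𝒜
    (by exact_mod_cast NeZero.pos m) hh h0 (hf ν c hc) ?_, rfl⟩
  rw [← Ideal.Quotient.eq_zero_iff_mem, ← hg, hgx]

theorem image_ker_eq_ker [IsDomain A] [NeZero m] (hh : h ∈ 𝒜 m) (h0 : h ≠ 0) :
    Ideal.Quotient.mk _ '' {a | f a = 0} = {x : A ⧸ Ideal.span {h - 1} | g x = 0} := by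
  refine subset_antisymm ?_ fun x (hx : g x = 0) => ?_
  · rintro _ ⟨a, ha, rfl⟩
    simp [hg, show f a = 0 from ha]
  obtain ⟨y, hy, rfl⟩ := exists_sum_eq_of_mem_quotientPiece 𝒜 (m := m) x
  have hgy (r : ZMod m) : g (y r) = 0 := by
    have hshift (r : ZMod m) : g (y (r + d)) ∈ quotientPiece 𝒜 h m r := by
      simpa using map_mem_quotientPiece 𝒜 hf hg hh (hy (r + d))
    have hsum : ∑ r, g (y (r + d)) = 0 := by
      rw [Fintype.sum_equiv (Equiv.addRight (d : ZMod m)) (fun r => g (y (r + d)))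
        (fun r => g (y r)) fun _ => rfl, ← map_sum, hx]
    simpa using eq_zero_of_sum_eq_zero_of_mem_quotientPiece 𝒜 hh h0 hshift hsum (r - d)
  choose ν _ c hc hfc hcy using fun r =>
    exists_ker_mk_eq_of_mem_quotientPiece 𝒜 hf hg hh h0 (hy r) (hgy r)
  exact ⟨∑ r, c r, by simp [map_sum, hfc], by simp [map_sum, hcy]⟩

end GradedLinearMap

theorem AddSubgroup.closure_intCast_singleton_toAddSubmonoid {G : Type*} [AddGroupWithOne G]
    [Finite G] {T : AddSubmonoid ℤ} {e : ℤ}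
    (he : AddSubgroup.closure (T : Set ℤ) = AddSubgroup.closure {e}) :
    (AddSubgroup.closure {(e : G)}).toAddSubmonoid = T.map (Int.castAddHom G) := by
  change (closure {Int.castAddHom G e}).toAddSubmonoid = _
  rw [← Set.image_singleton, ← AddMonoidHom.map_closure, ← he, AddMonoidHom.map_closure,
    AddSubgroup.closure_toAddSubmonoid_of_finite, ← AddMonoidHom.map_mclosure,
    AddSubmonoid.closure_eq]

section KernelDegrees

variable {R A : Type*} [CommRing R] [CommRing A] [IsDomain A] [Algebra R A]
  (𝒜 : ℤ → Submodule R A) [GradedAlgebra 𝒜]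

def kerDegrees (D : Derivation R A A) : AddSubmonoid ℤ where
  carrier := {ν | ∃ a ∈ 𝒜 ν, a ≠ 0 ∧ D a = 0}
  zero_mem' := ⟨1, SetLike.one_mem_graded 𝒜, one_ne_zero, D.map_one_eq_zero⟩
  add_mem' := by
    rintro ν₁ ν₂ ⟨a₁, ha₁, ha₁0, hDa₁⟩ ⟨a₂, ha₂, ha₂0, hDa₂⟩
    exact ⟨a₁ * a₂, SetLike.mul_mem_graded ha₁ ha₂, mul_ne_zero ha₁0 ha₂0, by
      simp [Derivation.leibniz, hDa₁, hDa₂]⟩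

end KernelDegrees

theorem stmt19_general {k A : Type*} [Field k] [CommRing A] [IsDomain A]
    [Algebra k A]
    (𝒜 : ℤ → Submodule k A) [GradedAlgebra 𝒜]
    (D : Derivation k A A)
    (d : ℤ) (hhom : ∀ ν : ℤ, ∀ a ∈ 𝒜 ν, D a ∈ 𝒜 (ν - d))
    (m : ℕ) (hm : 0 < m) (h : A) (hh : h ∈ 𝒜 (m : ℤ))
    (hdom : IsDomain (A ⧸ Ideal.span {h - 1}))
    (D' : Derivation k (A ⧸ Ideal.span {h - 1}) (A ⧸ Ideal.span {h - 1}))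
    (hD' : ∀ a : A, D' (Ideal.Quotient.mk (Ideal.span {h - 1}) a)
        = Ideal.Quotient.mk (Ideal.span {h - 1}) (D a))
    (e : ℕ)
    (he : AddSubgroup.closure {ν : ℤ | ∃ a ∈ 𝒜 ν, a ≠ 0 ∧ D a = 0}
        = AddSubgroup.closure {(e : ℤ)}) :
    (Ideal.Quotient.mk (Ideal.span {h - 1}) '' {a : A | D a = 0}
        = {x : A ⧸ Ideal.span {h - 1} | D' x = 0}) ∧
    (∀ i : ZMod m,
      (∃ x ∈ Submodule.span k ((Ideal.Quotient.mk (Ideal.span {h - 1})) ''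
          {a : A | ∃ ν : ℤ, ((ν : ZMod m) = i) ∧ a ∈ 𝒜 ν}),
        x ≠ 0 ∧ D' x = 0) ↔
      i ∈ AddSubgroup.closure {((e : ℤ) : ZMod m)}) := by
  have : NeZero m := ⟨hm.ne'⟩
  have h0 : h ≠ 0 := by
    rintro rfl
    exact one_ne_zero ((Ideal.Quotient.mk_span_sub_one_self (0 : A)).symm.trans (map_zero _))
  refine ⟨image_ker_eq_ker 𝒜 (f := D.toLinearMap) hhom (g := D'.toLinearMap) hD' hh h0,
    fun i => ?_⟩
  rw [← AddSubgroup.mem_toAddSubmonoid,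
    AddSubgroup.closure_intCast_singleton_toAddSubmonoid (T := kerDegrees 𝒜 D) he]
  constructor
  · rintro ⟨x, hx, hx0, hD'x⟩
    obtain ⟨ν, rfl, c, hc, hDc, rfl⟩ :=
      exists_ker_mk_eq_of_mem_quotientPiece 𝒜 (f := D.toLinearMap) hhom hD' hh h0 hx hD'x
    exact ⟨ν, ⟨c, hc, by rintro rfl; simp at hx0, hDc⟩, rfl⟩
  · rintro ⟨ν, ⟨c, hc, hc0, hDc⟩, rfl⟩
    refine ⟨_, mk_mem_quotientPiece 𝒜 hc, fun hc' => hc0 ?_, by simp [hD', hDc]⟩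
    exact eq_zero_of_homogeneous_mem_span_sub_one 𝒜 (by exact_mod_cast hm) hh h0 hc
      (Ideal.Quotient.eq_zero_iff_mem.mp hc')

/-- Lemma 1.8: let `A` be a positively graded affine domain with `e(A)=1`,
`∂` a nonzero homogeneous locally nilpotent derivation of degree `−d`, `h ∈ A^∂_m`
(`m > 0`), and `F = A/(h−1)` a domain with induced derivation `∂̄`. Then the image of the
graded kernel `A^∂` in `F` equals `ker ∂̄`, and the support of the `ℤ/mℤ`-grading of
`F^{∂̄}` is the subgroup of `ℤ/mℤ` generated by the class of `e(A^∂)`. -/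
theorem stmt19 {k A : Type*} [Field k] [CharZero k] [CommRing A] [IsDomain A]
    [Algebra k A] [Algebra.FiniteType k A]
    (𝒜 : ℤ → Submodule k A) [GradedAlgebra 𝒜]
    (hpos : ∀ ν : ℤ, ν < 0 → 𝒜 ν = ⊥)
    (hsat : AddSubgroup.closure {ν : ℤ | 𝒜 ν ≠ ⊥} = ⊤)
    (D : Derivation k A A) (hD : IsLND D) (hne : D ≠ 0)
    (d : ℤ) (hhom : ∀ ν : ℤ, ∀ a ∈ 𝒜 ν, D a ∈ 𝒜 (ν - d))
    (m : ℕ) (hm : 0 < m) (h : A) (hh : h ∈ 𝒜 (m : ℤ)) (hker : D h = 0)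
    (hdom : IsDomain (A ⧸ Ideal.span {h - 1}))
    (D' : Derivation k (A ⧸ Ideal.span {h - 1}) (A ⧸ Ideal.span {h - 1}))
    (hD' : ∀ a : A, D' (Ideal.Quotient.mk (Ideal.span {h - 1}) a)
        = Ideal.Quotient.mk (Ideal.span {h - 1}) (D a))
    (e : ℕ)
    (he : AddSubgroup.closure {ν : ℤ | ∃ a ∈ 𝒜 ν, a ≠ 0 ∧ D a = 0}
        = AddSubgroup.closure {(e : ℤ)}) :
    (Ideal.Quotient.mk (Ideal.span {h - 1}) '' {a : A | D a = 0}
        = {x : A ⧸ Ideal.span {h - 1} | D' x = 0}) ∧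
    (∀ i : ZMod m,
      (∃ x ∈ Submodule.span k ((Ideal.Quotient.mk (Ideal.span {h - 1})) ''
          {a : A | ∃ ν : ℤ, ((ν : ZMod m) = i) ∧ a ∈ 𝒜 ν}),
        x ≠ 0 ∧ D' x = 0) ↔
      i ∈ AddSubgroup.closure {((e : ℤ) : ZMod m)}) :=
  stmt19_general 𝒜 D d hhom m hm h hh hdom D' hD' e he
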